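/- Let F be a field of characteristic p > 0 with an m-variate iterative derivation θ, let ℓ ∈ ℕ, and set J_ℓ := { j ∈ ℕ^m \ {0} : j_i < p^ℓ for all i } and F_ℓ := ∩_{j∈J_ℓ} ker(θ^{(j)}). Then θ(F_ℓ) ⊆ F_ℓ[[T_1^{p^ℓ},…,T_m^{p^ℓ}]]; explicitly: for every x ∈ F_ℓ and every k ∈ ℕ^m, one has θ^{(k)}(x) = 0 unless every coordinate of k is divisible by p^ℓ, and θ^{(k)}(x) ∈ F_ℓ for every k ∈ ℕ^m. -/

import Mathlib

/-!
Write `k = i + j` with every `i μ` a multiple of `p ^ ℓ` and `j ∈ J_ℓ` the vector of remainders.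
Iterativity gives `θ^{(i)} θ^{(j)} x = binom(k, i) θ^{(k)} x`, and by Lucas's theorem in base
`p ^ ℓ` the coefficient is `≡ 1 mod p`, so `θ^{(k)} x = 0` as soon as `j ≠ 0`. For `j ∈ J_ℓ`,
`θ^{(j)} θ^{(k)} x = binom(j + k, j) θ^{(j + k)} x`: either `j + k` is not divisible by `p ^ ℓ`
and the first part applies, or it is, and Lucas makes the coefficient vanish mod `p` because
`0 < j μ < p ^ ℓ` for some `μ`.
-/

open scoped TensorProduct

/-- `binom(i+j, i)` for multi-indices: `∏ μ, (i μ + j μ).choose (i μ)`. -/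
def multiChoose {m : ℕ} (i j : Fin m →₀ ℕ) : ℕ :=
  ∏ μ : Fin m, Nat.choose (i μ + j μ) (i μ)

/-- An `m`-variate iterative derivation on a commutative ring `R`: a ring homomorphism
`θ : R → R[[T_1,…,T_m]]`, written `θ(r) = Σ_k θ^{(k)}(r)·T^k`, with `θ^{(0)} = id` and
`θ^{(i)} ∘ θ^{(j)} = binom(i+j,i)·θ^{(i+j)}` for all multi-indices `i, j`. -/
structure IterativeDerivation (m : ℕ) (R : Type*) [CommRing R] where
  toRingHom : R →+* MvPowerSeries (Fin m) R
  coeff_zero : ∀ r : R, MvPowerSeries.coeff 0 (toRingHom r) = r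
  iterate : ∀ (i j : Fin m →₀ ℕ) (r : R),
    MvPowerSeries.coeff i (toRingHom (MvPowerSeries.coeff j (toRingHom r))) =
      multiChoose i j • MvPowerSeries.coeff (i + j) (toRingHom r)

namespace IterativeDerivation

/-- The coefficient maps `θ^{(k)} : R → R` of an iterative derivation. -/
noncomputable def D {m : ℕ} {R : Type*} [CommRing R] (θ : IterativeDerivation m R)
    (k : Fin m →₀ ℕ) (r : R) : R :=
  MvPowerSeries.coeff k (θ.toRingHom r)

end IterativeDerivation

/-- The index set `J_ℓ = { j ∈ ℕ^m \ {0} : j_i < p^ℓ for all i }`. -/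
def Jset (m p ℓ : ℕ) : Set (Fin m →₀ ℕ) :=
  {j : Fin m →₀ ℕ | j ≠ 0 ∧ ∀ i : Fin m, j i < p ^ ℓ}

namespace Choose

variable {p : ℕ} [Fact p.Prime]

theorem choose_modEq_choose_mod_pow_mul_choose_div_pow_nat (ℓ n k : ℕ) :
    n.choose k ≡ (n % p ^ ℓ).choose (k % p ^ ℓ) * (n / p ^ ℓ).choose (k / p ^ ℓ) [MOD p] := by
  induction ℓ generalizing n k with
  | zero => simp only [pow_zero, Nat.mod_one, Nat.div_one, Nat.choose_zero_right, one_mul]; rfl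
  | succ ℓ ih =>
    calc n.choose k
        ≡ (n % p).choose (k % p) * (n / p).choose (k / p) [MOD p] :=
          choose_modEq_choose_mod_mul_choose_div_nat
      _ ≡ (n % p).choose (k % p) * ((n / p % p ^ ℓ).choose (k / p % p ^ ℓ) *
            (n / p / p ^ ℓ).choose (k / p / p ^ ℓ)) [MOD p] := (ih _ _).mul_left _
      _ ≡ (n % p ^ (ℓ + 1)).choose (k % p ^ (ℓ + 1)) *
            (n / p ^ (ℓ + 1)).choose (k / p ^ (ℓ + 1)) [MOD p] := by
        have hdigits := (choose_modEq_choose_mod_mul_choose_div_nat (p := p)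
          (n := n % p ^ (ℓ + 1)) (k := k % p ^ (ℓ + 1))).symm
        simp only [pow_succ', Nat.mod_mul_right_mod, Nat.mod_mul_right_div_self,
          Nat.div_div_eq_div_mul] at hdigits ⊢
        rw [← mul_assoc]
        exact hdigits.mul_right _

theorem choose_add_modEq_one {ℓ n b : ℕ} (hn : p ^ ℓ ∣ n) (hb : b < p ^ ℓ) :
    (n + b).choose n ≡ 1 [MOD p] := by
  obtain ⟨a, rfl⟩ := hn
  have hq : 0 < p ^ ℓ := pow_pos (Fact.out : p.Prime).pos ℓ
  refine (choose_modEq_choose_mod_pow_mul_choose_div_pow_nat ℓ _ _).trans ?_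
  simp [Nat.mul_add_div hq, Nat.div_eq_of_lt hb, Nat.mod_eq_of_lt hb, hq, Nat.ModEq.refl]

theorem prime_dvd_choose_of_pow_dvd {ℓ n r : ℕ} (hn : p ^ ℓ ∣ n) (hr₀ : 0 < r)
    (hr : r < p ^ ℓ) : p ∣ n.choose r := by
  refine Nat.modEq_zero_iff_dvd.mp ?_
  refine (choose_modEq_choose_mod_pow_mul_choose_div_pow_nat ℓ n r).trans ?_
  simp [Nat.mod_eq_zero_of_dvd hn, Nat.mod_eq_of_lt hr, Nat.choose_eq_zero_of_lt hr₀,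
    Nat.ModEq.refl]

end Choose

section multiChoose

variable {m p ℓ : ℕ}

theorem Jset.exists_add_of_not_forall_dvd (hp : 0 < p) {k : Fin m →₀ ℕ}
    (hk : ¬ ∀ μ, p ^ ℓ ∣ k μ) : ∃ i j, i + j = k ∧ (∀ μ, p ^ ℓ ∣ i μ) ∧ j ∈ Jset m p ℓ := by
  let j := k.mapRange (· % p ^ ℓ) (Nat.zero_mod _)
  have hjk : j ≤ k := fun μ => Nat.mod_le _ _
  refine ⟨k - j, j, tsub_add_cancel_of_le hjk, fun μ => Nat.dvd_sub_mod (k μ), ?_, fun μ =>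
    Nat.mod_lt _ (pow_pos hp ℓ)⟩
  obtain ⟨μ, hμ⟩ := not_forall.mp hk
  exact Finsupp.ne_iff.mpr ⟨μ, fun h => hμ (Nat.dvd_of_mod_eq_zero h)⟩

variable [Fact p.Prime]

theorem multiChoose_modEq_one {i j : Fin m →₀ ℕ} (hi : ∀ μ, p ^ ℓ ∣ i μ)
    (hj : ∀ μ, j μ < p ^ ℓ) : multiChoose i j ≡ 1 [MOD p] := by
  simpa [multiChoose] using Nat.ModEq.prod (s := Finset.univ) (g := fun _ => 1) fun μ _ =>
    Choose.choose_add_modEq_one (hi μ) (hj μ)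

theorem prime_dvd_multiChoose {j k : Fin m →₀ ℕ} (hj : j ∈ Jset m p ℓ)
    (hjk : ∀ μ, p ^ ℓ ∣ (j + k) μ) : p ∣ multiChoose j k := by
  obtain ⟨μ, hμ⟩ := Finsupp.ne_iff.mp hj.1
  exact (Choose.prime_dvd_choose_of_pow_dvd (hjk μ) (Nat.pos_of_ne_zero hμ) (hj.2 μ)).trans
    (Finset.dvd_prod_of_mem _ (Finset.mem_univ μ))

end multiChoose

namespace IterativeDerivation

variable {m : ℕ} {R : Type*} [CommRing R] (θ : IterativeDerivation m R)

theorem D_D (i j : Fin m →₀ ℕ) (r : R) : θ.D i (θ.D j r) = multiChoose i j • θ.D (i + j) r :=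
  θ.iterate i j r

variable {p ℓ : ℕ} [Fact p.Prime] [CharP R p] {x : R}

theorem D_eq_zero_of_not_forall_dvd (hx : ∀ j ∈ Jset m p ℓ, θ.D j x = 0)
    {k : Fin m →₀ ℕ} (hk : ¬ ∀ μ, p ^ ℓ ∣ k μ) : θ.D k x = 0 := by
  obtain ⟨i, j, rfl, hi, hj⟩ := Jset.exists_add_of_not_forall_dvd (Fact.out : p.Prime).pos hk
  have hcoeff : (multiChoose i j : R) = 1 := by
    exact_mod_cast (CharP.natCast_eq_natCast R p).mpr (multiChoose_modEq_one hi hj.2)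
  calc θ.D (i + j) x = multiChoose i j • θ.D (i + j) x := by rw [nsmul_eq_mul, hcoeff, one_mul]
    _ = θ.D i (θ.D j x) := (θ.D_D i j x).symm
    _ = 0 := by rw [hx j hj]; simp [D]

theorem D_D_eq_zero_of_mem_Jset (hx : ∀ j ∈ Jset m p ℓ, θ.D j x = 0) (k : Fin m →₀ ℕ)
    {j : Fin m →₀ ℕ} (hj : j ∈ Jset m p ℓ) : θ.D j (θ.D k x) = 0 := by
  rw [θ.D_D]
  by_cases hjk : ∀ μ, p ^ ℓ ∣ (j + k) μ
  · rw [nsmul_eq_mul, (CharP.cast_eq_zero_iff R p _).mpr (prime_dvd_multiChoose hj hjk), zero_mul]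
  · rw [θ.D_eq_zero_of_not_forall_dvd hx hjk, smul_zero]

end IterativeDerivation

/-- Let `F` be a field of characteristic `p > 0` with an `m`-variate iterative
derivation `θ`, and `F_ℓ := ∩_{j ∈ J_ℓ} ker θ^{(j)}`. Then
`θ(F_ℓ) ⊆ F_ℓ[[T_1^{p^ℓ},…,T_m^{p^ℓ}]]`: for `x ∈ F_ℓ` one has `θ^{(k)}(x) = 0` unless
all coordinates of `k` are divisible by `p^ℓ`, and `θ^{(k)}(x) ∈ F_ℓ` for all `k`. -/
theorem kernel_field_invariant
    (m p ℓ : ℕ) (hp : p.Prime) (F : Type) [Field F] [CharP F p]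
    (θ : IterativeDerivation m F)
    (x : F) (hx : ∀ j ∈ Jset m p ℓ, θ.D j x = 0) :
    (∀ k : Fin m →₀ ℕ, ¬ (∀ i : Fin m, p ^ ℓ ∣ k i) → θ.D k x = 0) ∧
    (∀ k : Fin m →₀ ℕ, ∀ j ∈ Jset m p ℓ, θ.D j (θ.D k x) = 0) := by
  have := Fact.mk hp
  exact ⟨fun k hk => θ.D_eq_zero_of_not_forall_dvd hx hk,
    fun k j hj => θ.D_D_eq_zero_of_mem_Jset hx k hj⟩
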